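/- Yes-case cost bound for the SSE reduction: if the vertex set V of a graph G = (V,E) with |V| = n can be partitioned into q sets S_1,...,S_q each of size n/q such that at most an eps' fraction of edges have endpoints in different sets, then there exists a hierarchical clustering tree T with cost_G(T) <= (n/q) * |E| + eps' * n * |E|. -/

import Mathlib

/-- A rooted binary tree whose leaves are labelled by elements of `α`.
A hierarchical clustering of a vertex set is such a tree whose leaf set is the vertex set. -/
inductive HCTree (α : Type) where
  | leaf : α → HCTree α
  | node : HCTree α → HCTree α → HCTree α

namespace HCTree

variable {α : Type} [DecidableEq α]

/-- The set of leaf labels of the tree. -/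
def leaves : HCTree α → Finset α
  | leaf v => {v}
  | node l r => l.leaves ∪ r.leaves

/-- The leaf set of the minimal subtree of `T` containing both `u` and `v`
(i.e. the cluster at the lowest common ancestor of `u` and `v`). -/
def cluster : HCTree α → α → α → Finset α
  | leaf w, _, _ => {w}
  | node l r, u, v =>
    if u ∈ l.leaves ∧ v ∈ l.leaves then l.cluster u v
    else if u ∈ r.leaves ∧ v ∈ r.leaves then r.cluster u v
    else l.leaves ∪ r.leaves

/-- A tree is proper if its leaf labels are distinct, i.e. the leaf sets of the two
children of every internal node are disjoint. -/
def proper : HCTree α → Prop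
  | leaf _ => True
  | node l r => Disjoint l.leaves r.leaves ∧ l.proper ∧ r.proper

end HCTree

/-!
The tree first separates the parts `S i` from each other by a caterpillar of binary splits and
then splits each part arbitrarily. An edge inside `S i` then has its lowest common ancestor
inside the subtree of `S i`, so its cluster has at most `n / q` leaves; any other edge has a
cluster of at most `n` leaves, and there are at most `ε' |E|` such edges.
-/

open Finset

namespace HCTree

variable {α : Type} [DecidableEq α]

theorem cluster_subset_leaves : ∀ (T : HCTree α) (u v : α), T.cluster u v ⊆ T.leaves
  | leaf _, _, _ => subset_rfl
  | node l r, u, v => by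
    simp only [cluster, leaves]
    split_ifs
    · exact (cluster_subset_leaves l u v).trans subset_union_left
    · exact (cluster_subset_leaves r u v).trans subset_union_right
    · exact subset_rfl

theorem cluster_node_of_mem_left {l r : HCTree α} {u v : α} (hu : u ∈ l.leaves)
    (hv : v ∈ l.leaves) : (node l r).cluster u v = l.cluster u v := by
  simp [cluster, hu, hv]

theorem cluster_node_of_mem_right {l r : HCTree α} {u v : α} (hul : u ∉ l.leaves)
    (hu : u ∈ r.leaves) (hv : v ∈ r.leaves) : (node l r).cluster u v = r.cluster u v := by
  simp [cluster, hul, hu, hv]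

theorem exists_proper_leaves_eq {s : Finset α} (hs : s.Nonempty) :
    ∃ T : HCTree α, T.proper ∧ T.leaves = s := by
  induction hs using Finset.Nonempty.cons_induction with
  | singleton a => exact ⟨leaf a, trivial, rfl⟩
  | cons a s ha _ ih =>
    obtain ⟨T, hT, rfl⟩ := ih
    refine ⟨node (leaf a) T, ⟨by simpa [leaves] using ha, trivial, hT⟩, ?_⟩
    rw [cons_eq_insert, insert_eq]
    rfl

theorem exists_proper_cluster_subset_of_forall_nonempty {ι : Type*} {P : ι → Finset α}
    {I : Finset ι} (hI : I.Nonempty) (hne : ∀ i ∈ I, (P i).Nonempty)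
    (hdisj : (I : Set ι).PairwiseDisjoint P) :
    ∃ T : HCTree α, T.proper ∧ T.leaves = I.biUnion P ∧
      ∀ i ∈ I, ∀ u ∈ P i, ∀ v ∈ P i, T.cluster u v ⊆ P i := by
  induction hI using Finset.Nonempty.cons_induction with
  | singleton i =>
    obtain ⟨T, hT, hleaves⟩ := exists_proper_leaves_eq (hne i (mem_singleton_self i))
    refine ⟨T, hT, by simpa using hleaves, ?_⟩
    simp only [mem_singleton, forall_eq]
    exact fun u _ v _ => hleaves ▸ cluster_subset_leaves T u v
  | cons i I hi _ ih =>
    rw [coe_cons, Set.pairwiseDisjoint_insert] at hdisj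
    obtain ⟨Ti, hTi, hleaves_i⟩ := exists_proper_leaves_eq (hne i (mem_cons_self i I))
    obtain ⟨T, hT, hleaves, hcluster⟩ :=
      ih (fun j hj => hne j (mem_cons_of_mem hj)) hdisj.1
    have hdisj_i : Disjoint (P i) (I.biUnion P) :=
      (disjoint_biUnion_right _ _ _).mpr fun j hj => hdisj.2 j hj (ne_of_mem_of_not_mem hj hi).symm
    refine ⟨node Ti T, ⟨hleaves_i ▸ hleaves ▸ hdisj_i, hTi, hT⟩, ?_, ?_⟩
    · ext x
      simp [leaves, hleaves_i, hleaves]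
    · simp only [mem_cons, forall_eq_or_imp]
      refine ⟨fun u hu v hv => ?_, fun j hj u hu v hv => ?_⟩
      · rw [cluster_node_of_mem_left (hleaves_i ▸ hu) (hleaves_i ▸ hv), ← hleaves_i]
        exact cluster_subset_leaves Ti u v
      · have hu' : u ∈ T.leaves := hleaves ▸ mem_biUnion.mpr ⟨j, hj, hu⟩
        have hv' : v ∈ T.leaves := hleaves ▸ mem_biUnion.mpr ⟨j, hj, hv⟩
        have hu_i : u ∉ Ti.leaves := fun h =>
          disjoint_left.mp hdisj_i (hleaves_i ▸ h) (hleaves ▸ hu')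
        rw [cluster_node_of_mem_right hu_i hu' hv']
        exact hcluster j hj u hu v hv

theorem exists_proper_cluster_subset {ι : Type*} {P : ι → Finset α} {I : Finset ι}
    (hne : (I.biUnion P).Nonempty) (hdisj : (I : Set ι).PairwiseDisjoint P) :
    ∃ T : HCTree α, T.proper ∧ T.leaves = I.biUnion P ∧
      ∀ i ∈ I, ∀ u ∈ P i, ∀ v ∈ P i, T.cluster u v ⊆ P i := by
  classical
  set J := I.filter fun i => (P i).Nonempty
  have hJ : J.biUnion P = I.biUnion P := by
    ext x
    simp only [J, mem_biUnion, mem_filter]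
    exact ⟨fun ⟨i, ⟨hi, _⟩, hx⟩ => ⟨i, hi, hx⟩,
      fun ⟨i, hi, hx⟩ => ⟨i, ⟨hi, x, hx⟩, hx⟩⟩
  have hJne : J.Nonempty := by
    obtain ⟨x, hx⟩ := hJ ▸ hne
    obtain ⟨i, hi, -⟩ := mem_biUnion.mp hx
    exact ⟨i, hi⟩
  obtain ⟨T, hT, hleaves, hcluster⟩ := exists_proper_cluster_subset_of_forall_nonempty hJne
    (fun i hi => (mem_filter.mp hi).2) (hdisj.subset (coe_subset.mpr (filter_subset _ _)))
  exact ⟨T, hT, hleaves.trans hJ,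
    fun i hi u hu v hv => hcluster i (mem_filter.mpr ⟨hi, u, hu⟩) u hu v hv⟩

theorem sum_card_cluster_le (T : HCTree α) (E : Finset (α × α)) (p : α × α → Prop)
    [DecidablePred p] (m : ℕ) (hm : ∀ e ∈ E, ¬p e → #(T.cluster e.1 e.2) ≤ m) :
    ∑ e ∈ E, #(T.cluster e.1 e.2) ≤ m * #E + #T.leaves * #(E.filter p) := by
  calc ∑ e ∈ E, #(T.cluster e.1 e.2)
      ≤ ∑ e ∈ E, (m + if p e then #T.leaves else 0) := by
        refine sum_le_sum fun e he => ?_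
        split_ifs with h
        · exact (card_le_card (cluster_subset_leaves T e.1 e.2)).trans le_add_self
        · exact hm e he h
    _ = m * #E + #T.leaves * #(E.filter p) := by
        rw [sum_add_distrib, ← sum_filter, sum_const, sum_const, smul_eq_mul, smul_eq_mul]
        ring

end HCTree

theorem sse_yes_case_cost_bound_general {α : Type} [DecidableEq α]
    (V : Finset α) (n : ℕ) (hn : n = V.card) (hpos : 0 < n)
    (E : Finset (α × α))
    (q : ℕ) (S : Fin q → Finset α)
    (hcard : ∀ i, (S i).card = n / q)
    (hdisj : ∀ i j, i ≠ j → Disjoint (S i) (S j))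
    (hunion : Finset.univ.biUnion S = V)
    (ε' : ℝ)
    (hcross : ((E.filter fun e => ∀ i : Fin q, ¬(e.1 ∈ S i ∧ e.2 ∈ S i)).card : ℝ)
        ≤ ε' * E.card) :
    ∃ T : HCTree α, T.proper ∧ T.leaves = V ∧
      (∑ e ∈ E, ((T.cluster e.1 e.2).card : ℝ))
        ≤ ((n / q : ℕ) : ℝ) * E.card + ε' * n * E.card := by
  obtain ⟨T, hT, hleaves, hcluster⟩ := HCTree.exists_proper_cluster_subset (I := univ)
    (hunion ▸ card_pos.mp (hn ▸ hpos)) fun i _ j _ hij => hdisj i j hij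
  rw [hunion] at hleaves
  refine ⟨T, hT, hleaves, ?_⟩
  set crossing : α × α → Prop := fun e => ∀ i : Fin q, ¬(e.1 ∈ S i ∧ e.2 ∈ S i)
  have hsum := T.sum_card_cluster_le E crossing (n / q) fun e _ he => by
    obtain ⟨i, hu, hv⟩ : ∃ i, e.1 ∈ S i ∧ e.2 ∈ S i := by simpa [crossing] using he
    exact hcard i ▸ card_le_card (hcluster i (mem_univ i) e.1 hu e.2 hv)
  rw [hleaves, ← hn] at hsum
  calc ∑ e ∈ E, (#(T.cluster e.1 e.2) : ℝ)
      ≤ (n / q : ℕ) * #E + n * #(E.filter crossing) := by exact_mod_cast hsum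
    _ ≤ (n / q : ℕ) * #E + ε' * n * #E := by
        linarith [mul_le_mul_of_nonneg_left hcross n.cast_nonneg]

/-- Yes-case cost bound for the SSE reduction. If `V` (of size `n`)
is partitioned into `q` sets `S 1, ..., S q`, each of size `n/q`, such that at
most an `ε'` fraction of the edges cross between different sets, then there is a
hierarchical clustering tree `T` with `cost_G(T) ≤ (n/q)·|E| + ε'·n·|E|`. -/
theorem sse_yes_case_cost_bound {α : Type} [DecidableEq α]
    (V : Finset α) (n : ℕ) (hn : n = V.card) (hpos : 0 < n)
    (E : Finset (α × α)) (hE : ∀ e ∈ E, e.1 ∈ V ∧ e.2 ∈ V)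
    (q : ℕ) (hq : q ∣ n) (S : Fin q → Finset α)
    (hcard : ∀ i, (S i).card = n / q)
    (hdisj : ∀ i j, i ≠ j → Disjoint (S i) (S j))
    (hunion : Finset.univ.biUnion S = V)
    (ε' : ℝ) (hε : 0 ≤ ε')
    (hcross : ((E.filter fun e => ∀ i : Fin q, ¬(e.1 ∈ S i ∧ e.2 ∈ S i)).card : ℝ)
        ≤ ε' * E.card) :
    ∃ T : HCTree α, T.proper ∧ T.leaves = V ∧
      (∑ e ∈ E, ((T.cluster e.1 e.2).card : ℝ))
        ≤ ((n / q : ℕ) : ℝ) * E.card + ε' * n * E.card :=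
  sse_yes_case_cost_bound_general V n hn hpos E q S hcard hdisj hunion ε' hcross
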